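/- arXiv:2203.13095 — 3 statements merged into one kernel-verified Lean document; each statement's English description precedes it below -/
import Mathlib

section
/- Every pair of k-cores of a graph is either disjoint or one is contained in the other (cores form a laminar family). Precisely, if K1 is a k1-core and K2 is a k2-core of a finite simple graph G, then K1 ∩ K2 is empty, or K1 ⊆ K2, or K2 ⊆ K1. -/
open Set

/-- `K` induces a connected subgraph of `G` with minimum degree at least `k`. -/
def IsCoreish {V : Type*} (G : SimpleGraph V) (k : ℕ) (K : Set V) : Prop :=
  (G.induce K).Connected ∧ ∀ v ∈ K, k ≤ {u ∈ K | G.Adj v u}.ncard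

/-- A `k`-core: maximal among connected vertex sets with induced min degree ≥ k. -/
def IsKCore {V : Type*} (G : SimpleGraph V) (k : ℕ) (K : Set V) : Prop :=
  IsCoreish G k K ∧ ∀ K' : Set V, IsCoreish G k K' → K ⊆ K' → K' = K

/-- The coreness of a vertex: the largest `k` such that `v` lies in a connected
vertex set whose induced subgraph has minimum degree ≥ k. -/
noncomputable def coreness {V : Type*} (G : SimpleGraph V) (v : V) : ℕ :=
  sSup {k | ∃ K : Set V, IsCoreish G k K ∧ v ∈ K}

/-- A subcore: a maximal connected vertex set whose vertices all share the same coreness. -/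
def IsSubcore {V : Type*} (G : SimpleGraph V) (C : Set V) : Prop :=
  (G.induce C).Connected ∧ (∀ v ∈ C, ∀ w ∈ C, coreness G v = coreness G w) ∧
  ∀ C' : Set V, (G.induce C').Connected →
    (∀ v ∈ C', ∀ w ∈ C', coreness G v = coreness G w) → C ⊆ C' → C' = C

/-!
The union of two intersecting connected sets is connected, and a vertex of `K₁ ∪ K₂` keeps
all its neighbours from whichever of the two it lies in, so the union of a `k₁`-core and an
intersecting `k₂`-core with `k₁ ≤ k₂` still has minimum degree `k₁`. Maximality of the
`k₁`-core then forces the union to be that core.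
-/

namespace IsCoreish

variable {V : Type*} {G : SimpleGraph V} {k k₁ k₂ : ℕ} {K K₁ K₂ : Set V}

lemma mono (h : IsCoreish G k K) (hk : k₁ ≤ k) : IsCoreish G k₁ K :=
  ⟨h.1, fun v hv => hk.trans (h.2 v hv)⟩

lemma union [Finite V] (h₁ : IsCoreish G k₁ K₁) (h₂ : IsCoreish G k₂ K₂)
    (hne : (K₁ ∩ K₂).Nonempty) : IsCoreish G (min k₁ k₂) (K₁ ∪ K₂) := by
  refine ⟨SimpleGraph.induce_union_connected h₁.1.preconnected h₂.1.preconnected hne, ?_⟩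
  have degree_mono {K K' : Set V} (hK : K ⊆ K') (v : V) :
      {u ∈ K | G.Adj v u}.ncard ≤ {u ∈ K' | G.Adj v u}.ncard :=
    ncard_le_ncard (fun u hu => ⟨hK hu.1, hu.2⟩) (toFinite _)
  rintro v (hv | hv)
  · exact (min_le_left _ _).trans <| (h₁.2 v hv).trans (degree_mono subset_union_left v)
  · exact (min_le_right _ _).trans <| (h₂.2 v hv).trans (degree_mono subset_union_right v)

end IsCoreish

lemma IsKCore.subset_of_inter_nonempty {V : Type*} [Finite V] {G : SimpleGraph V}
    {k₁ k₂ : ℕ} {K₁ K₂ : Set V} (h₁ : IsKCore G k₁ K₁) (h₂ : IsCoreish G k₂ K₂)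
    (hk : k₁ ≤ k₂) (hne : (K₁ ∩ K₂).Nonempty) : K₂ ⊆ K₁ := by
  have hunion : IsCoreish G k₁ (K₁ ∪ K₂) := (h₁.1.union h₂ hne).mono (le_min le_rfl hk)
  rw [← h₁.2 _ hunion subset_union_left]
  exact subset_union_right

/-- Cores form a laminar family. -/
theorem cores_laminar {V : Type*} [Fintype V] (G : SimpleGraph V)
    (k1 k2 : ℕ) (K1 K2 : Set V)
    (h1 : IsKCore G k1 K1) (h2 : IsKCore G k2 K2) :
    K1 ∩ K2 = ∅ ∨ K1 ⊆ K2 ∨ K2 ⊆ K1 := by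
  rcases eq_empty_or_nonempty (K1 ∩ K2) with hempty | hne
  · exact Or.inl hempty
  rcases le_total k1 k2 with hk | hk
  · exact Or.inr (Or.inr (h1.subset_of_inter_nonempty h2.1 hk hne))
  · exact Or.inr (Or.inl (h2.subset_of_inter_nonempty h1.1 hk (inter_comm K1 K2 ▸ hne)))
end

section
/- Let K be a k-core of G with k > 0 such that every vertex of K has coreness strictly greater than k (the k-shell of K is empty). Then there is exactly one (k+1)-core contained in K; equivalently, a non-root shell tree node with no corresponding vertices has out-degree at most 1. -/
open Set

/-!
Each vertex `v` of `K` lies in some connected set `A` of minimum degree `k + 1`. Then `K ∪ A`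
is still connected of minimum degree `k`, so maximality of `K` forces `A ⊆ K`, and `v` has at
least `k + 1` neighbours in `K`. Thus `K` itself has minimum degree `k + 1`; it is then maximal
for `k + 1` because it is maximal for `k`, and any `(k + 1)`-core inside `K` equals `K` by its
own maximality.
-/

namespace IsCoreish

variable {V : Type*} {G : SimpleGraph V} {k : ℕ}

lemma of_le {m : ℕ} {K : Set V} (h : IsCoreish G m K) (hkm : k ≤ m) : IsCoreish G k K :=
  ⟨h.1, fun v hv => hkm.trans (h.2 v hv)⟩

lemma union_s9 [Finite V] {A B : Set V} {v : V} (hA : IsCoreish G k A) (hB : IsCoreish G k B)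
    (hvA : v ∈ A) (hvB : v ∈ B) : IsCoreish G k (A ∪ B) := by
  refine ⟨SimpleGraph.induce_union_connected hA.1.preconnected hB.1.preconnected ⟨v, hvA, hvB⟩,
    ?_⟩
  rintro w (hw | hw)
  · exact (hA.2 w hw).trans (ncard_le_ncard fun u hu => ⟨Or.inl hu.1, hu.2⟩)
  · exact (hB.2 w hw).trans (ncard_le_ncard fun u hu => ⟨Or.inr hu.1, hu.2⟩)

end IsCoreish

lemma exists_isCoreish_of_lt_coreness {V : Type*} {G : SimpleGraph V} {k : ℕ} {v : V}
    (h : k < coreness G v) : ∃ A : Set V, IsCoreish G (k + 1) A ∧ v ∈ A := by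
  have hne : {m | ∃ A : Set V, IsCoreish G m A ∧ v ∈ A}.Nonempty := by
    by_contra hempty
    rw [not_nonempty_iff_eq_empty] at hempty
    simp [coreness, hempty] at h
  obtain ⟨m, ⟨A, hA, hvA⟩, hkm⟩ := exists_lt_of_lt_csSup hne h
  exact ⟨A, hA.of_le hkm, hvA⟩

namespace IsKCore

variable {V : Type*} [Finite V] {G : SimpleGraph V} {k : ℕ} {K : Set V}

lemma subset_of_isCoreish (hK : IsKCore G k K) {A : Set V} {v : V} (hA : IsCoreish G k A)
    (hvK : v ∈ K) (hvA : v ∈ A) : A ⊆ K := by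
  rw [← hK.2 _ (hK.1.union_s9 hA hvK hvA) subset_union_left]
  exact subset_union_right

lemma isCoreish_succ (hK : IsKCore G k K) (hshell : ∀ v ∈ K, k < coreness G v) :
    IsCoreish G (k + 1) K := by
  refine ⟨hK.1.1, fun v hv => ?_⟩
  obtain ⟨A, hA, hvA⟩ := exists_isCoreish_of_lt_coreness (hshell v hv)
  have hAK : A ⊆ K := hK.subset_of_isCoreish (hA.of_le k.le_succ) hv hvA
  exact (hA.2 v hvA).trans (ncard_le_ncard fun u hu => ⟨hAK hu.1, hu.2⟩)

lemma succ (hK : IsKCore G k K) (hshell : ∀ v ∈ K, k < coreness G v) :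
    IsKCore G (k + 1) K :=
  ⟨hK.isCoreish_succ hshell, fun K' hK' hKK' => hK.2 K' (hK'.of_le k.le_succ) hKK'⟩

end IsKCore

theorem empty_shell_unique_child_general {V : Type*} [Fintype V] (G : SimpleGraph V)
    (k : ℕ) (K : Set V) (hK : IsKCore G k K)
    (hshell : ∀ v ∈ K, k < coreness G v) :
    ∃! K' : Set V, IsKCore G (k+1) K' ∧ K' ⊆ K := by
  have hK₁ : IsKCore G (k + 1) K := hK.succ hshell
  refine ⟨K, ⟨hK₁, subset_rfl⟩, ?_⟩
  rintro K' ⟨hK', hK'K⟩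
  exact (hK'.2 K hK₁.1 hK'K).symm

/-- If the k-shell of a k-core K (k > 0) is empty, i.e. every vertex of K has
coreness > k, then there is exactly one (k+1)-core contained in K. -/
theorem empty_shell_unique_child {V : Type*} [Fintype V] (G : SimpleGraph V)
    (k : ℕ) (hk : 0 < k) (K : Set V) (hK : IsKCore G k K)
    (hshell : ∀ v ∈ K, k < coreness G v) :
    ∃! K' : Set V, IsKCore G (k+1) K' ∧ K' ⊆ K :=
  empty_shell_unique_child_general G k K hK hshell
end

section
/- Inserting a single edge into a graph increases each vertex's coreness by at most 1. Precisely, if G⁺ = G ∪ {u,v} for an edge {u,v} ∉ E(G), then for all vertices w, κ_{G⁺}(w) ≤ κ_G(w) + 1. -/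
open Set

/-!
Let `K ∋ w` witness `coreness G' w = k`. Deleting the new edge costs every vertex of `K` at most
one neighbour in `K`, so `G` restricted to `K` has minimum degree `≥ k - 1`, though it may be
disconnected. The component of `w` in `G.induce K` contains every `G`-neighbour in `K` of its
vertices, hence keeps that minimum degree and witnesses `coreness G w ≥ k - 1`.
-/

namespace SimpleGraph

variable {V : Type*} {G : SimpleGraph V}

lemma ncard_sep_sup_fromEdgeSet_adj_le [Finite V] (e : Sym2 V) (K : Set V) (x : V) :
    {y ∈ K | (G ⊔ fromEdgeSet {e}).Adj x y}.ncard ≤ {y ∈ K | G.Adj x y}.ncard + 1 := by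
  have hsub : {y ∈ K | (G ⊔ fromEdgeSet {e}).Adj x y} ⊆
      {y ∈ K | G.Adj x y} ∪ {y | s(x, y) = e} := by
    rintro y ⟨hyK, hG | ⟨he, -⟩⟩
    exacts [Or.inl ⟨hyK, hG⟩, Or.inr he]
  have hle_one : {y | s(x, y) = e}.ncard ≤ 1 :=
    (ncard_le_one (toFinite _)).2 fun a ha b hb => Sym2.congr_right.1 (ha.trans hb.symm)
  calc _ ≤ ({y ∈ K | G.Adj x y} ∪ {y | s(x, y) = e}).ncard := ncard_le_ncard hsub
    _ ≤ _ := (ncard_union_le _ _).trans (by omega)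

lemma exists_isCoreish_of_forall_le_ncard {k : ℕ} {K : Set V} {w : V} (hwK : w ∈ K)
    (hdeg : ∀ x ∈ K, k ≤ {y ∈ K | G.Adj x y}.ncard) : ∃ C, IsCoreish G k C ∧ w ∈ C := by
  set c := (G.induce K).connectedComponentMk ⟨w, hwK⟩
  set C : Set V := Subtype.val '' c.supp
  have hCK : C ⊆ K := by rintro _ ⟨x, -, rfl⟩; exact x.2
  have hnbhd : ∀ x ∈ C, {y ∈ C | G.Adj x y} = {y ∈ K | G.Adj x y} := by
    rintro _ ⟨x, hx, rfl⟩
    ext y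
    refine ⟨fun ⟨hy, hadj⟩ => ⟨hCK hy, hadj⟩, fun ⟨hy, hadj⟩ => ⟨?_, hadj⟩⟩
    exact ⟨⟨y, hy⟩, c.mem_supp_of_adj_mem_supp (v := ⟨y, hy⟩) hx hadj, rfl⟩
  have hconn : (G.induce C).Connected := by
    let f : c.toSimpleGraph →g G.induce C :=
      { toFun x := ⟨x.1.1, x.1, x.2, rfl⟩
        map_rel' h := h }
    refine c.connected_toSimpleGraph.map f ?_
    rintro ⟨_, x, hx, rfl⟩
    exact ⟨⟨x, hx⟩, rfl⟩
  refine ⟨C, ⟨hconn, fun x hx => ?_⟩, ⟨w, hwK⟩, rfl, rfl⟩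
  rw [hnbhd x hx]
  exact hdeg x (hCK hx)

variable [Finite V]

lemma bddAbove_setOf_isCoreish (G : SimpleGraph V) (w : V) :
    BddAbove {k | ∃ K : Set V, IsCoreish G k K ∧ w ∈ K} :=
  ⟨Nat.card V, fun _ ⟨_, ⟨_, hdeg⟩, hwK⟩ => (hdeg w hwK).trans (ncard_le_card _)⟩

lemma exists_isCoreish_coreness (G : SimpleGraph V) (w : V) :
    ∃ K, IsCoreish G (coreness G w) K ∧ w ∈ K := by
  have hw : IsCoreish G 0 {w} ∧ w ∈ ({w} : Set V) :=
    ⟨⟨⟨Preconnected.of_subsingleton⟩, fun _ _ => Nat.zero_le _⟩, rfl⟩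
  exact Nat.sSup_mem (s := {k | ∃ K, IsCoreish G k K ∧ w ∈ K}) ⟨0, {w}, hw⟩
    (bddAbove_setOf_isCoreish G w)

lemma le_coreness {k : ℕ} {K : Set V} {w : V} (hK : IsCoreish G k K) (hwK : w ∈ K) :
    k ≤ coreness G w :=
  le_csSup (bddAbove_setOf_isCoreish G w) ⟨K, hK, hwK⟩

end SimpleGraph

theorem coreness_insert_at_most_one_general {V : Type*} [Fintype V] (G : SimpleGraph V)
    (u v : V)
    (G' : SimpleGraph V) (hG' : G' = G ⊔ SimpleGraph.fromEdgeSet {s(u, v)}) :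
    ∀ w : V, coreness G' w ≤ coreness G w + 1 := by
  intro w
  obtain ⟨K, ⟨-, hdeg'⟩, hwK⟩ := SimpleGraph.exists_isCoreish_coreness G' w
  have hdeg : ∀ x ∈ K, coreness G' w - 1 ≤ {y ∈ K | G.Adj x y}.ncard := fun x hx => by
    have hlost := hG' ▸ SimpleGraph.ncard_sep_sup_fromEdgeSet_adj_le (G := G) s(u, v) K x
    have hx' := hdeg' x hx
    omega
  obtain ⟨C, hC, hwC⟩ := SimpleGraph.exists_isCoreish_of_forall_le_ncard hwK hdeg
  have hle := SimpleGraph.le_coreness hC hwC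
  omega

/-- Inserting a single edge increases each vertex's coreness by at most 1. -/
theorem coreness_insert_at_most_one {V : Type*} [Fintype V] (G : SimpleGraph V)
    (u v : V) (huv : u ≠ v) (hnadj : ¬ G.Adj u v)
    (G' : SimpleGraph V) (hG' : G' = G ⊔ SimpleGraph.fromEdgeSet {s(u, v)}) :
    ∀ w : V, coreness G' w ≤ coreness G w + 1 :=
  coreness_insert_at_most_one_general G u v G' hG'
end
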